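/- arXiv:2410.21915 — 2 statements merged into one kernel-verified Lean document; each statement's English description precedes it below -/
import Mathlib

section
/- For every integer k ≥ 5, the limit λ(k) = lim_n λ_n(k) satisfies λ(k) > log k − 5. -/
/-!
Since `q! ≥ (q/e)^q`, passing from `λ_n = log q / p` to `λ_{n+1} = log (q-1)! / (p q)`
(with `p = p'_n`, `q = q'_n`) loses at most `2q / (p q) = 2 / p`. For `k ≥ 4` every `q'_n` is at
least `4`, so `p'_n ≥ 4^n`, and the total loss is at most `∑ 2 / 4^n = 8/3 < 5`.
-/

namespace ToeplitzPaper

open Filter Topology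


/-- The pair `(p'_n, q'_n)` of sequences: `p'_0 = 1`, `q'_0 = k`,
`p'_{n+1} = p'_n q'_n`, `q'_{n+1} = (q'_n − 1)!`. -/
def grill (k : ℕ) : ℕ → ℕ × ℕ
  | 0 => (1, k)
  | n + 1 => ((grill k n).1 * (grill k n).2, Nat.factorial ((grill k n).2 - 1))

/-- The sequence `p'_n = p'_n(k)`. -/
def pSeq' (k n : ℕ) : ℕ := (grill k n).1

/-- The sequence `q'_n = q'_n(k)`. -/
def qSeq' (k n : ℕ) : ℕ := (grill k n).2

/-- `λ_n(k) = (1/p'_n) log q'_n` (natural logarithm). -/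
noncomputable def lamSeq (k : ℕ) (n : ℕ) : ℝ := Real.log (qSeq' k n) / (pSeq' k n)

open Real
open scoped Nat

lemma self_mul_log_sub_log_factorial_le (n : ℕ) : n * log n - log (n ! : ℝ) ≤ n := by
  rcases n.eq_zero_or_pos with rfl | hn
  · simp
  have hpow : (n : ℝ) ^ n ≤ exp n * n ! :=
    (div_le_iff₀ (by positivity)).1 (pow_div_factorial_le_exp (n : ℝ) n.cast_nonneg n)
  have hlog := log_le_log (pow_pos (Nat.cast_pos.2 hn) n) hpow
  rw [log_pow, log_mul (exp_pos _).ne' (by positivity), log_exp] at hlog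
  linarith

lemma self_mul_log_sub_log_factorial_pred_le (q : ℕ) :
    q * log q - log ((q - 1)! : ℝ) ≤ 2 * q := by
  cases q with
  | zero => simp
  | succ m =>
    have hfac : log ((m + 1)! : ℝ) = log (m + 1 : ℕ) + log (m ! : ℝ) := by
      rw [Nat.factorial_succ, Nat.cast_mul, log_mul (by positivity) (by positivity)]
    have hstirling := self_mul_log_sub_log_factorial_le (m + 1)
    have hlog := log_le_self (m + 1 : ℕ).cast_nonneg
    rw [add_tsub_cancel_right]
    linarith

lemma sub_le_of_sub_succ_le_geometric {a : ℕ → ℝ} {C r : ℝ} (hC : 0 ≤ C) (hr₀ : 0 ≤ r)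
    (hr₁ : r < 1) (h : ∀ n, a n - a (n + 1) ≤ C * r ^ n) (n : ℕ) :
    a 0 - C / (1 - r) ≤ a n := by
  have hgeom : ∑ i ∈ Finset.range n, r ^ i ≤ 1 / (1 - r) := by
    have := geom_sum_Ico_le_of_lt_one (m := 0) (n := n) hr₀ hr₁
    rwa [← Finset.range_eq_Ico, pow_zero] at this
  have : a 0 - a n ≤ C / (1 - r) :=
    calc a 0 - a n = ∑ i ∈ Finset.range n, (a i - a (i + 1)) := (Finset.sum_range_sub' a n).symm
      _ ≤ ∑ i ∈ Finset.range n, C * r ^ i := Finset.sum_le_sum fun i _ ↦ h i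
      _ = C * ∑ i ∈ Finset.range n, r ^ i := (Finset.mul_sum ..).symm
      _ ≤ C * (1 / (1 - r)) := mul_le_mul_of_nonneg_left hgeom hC
      _ = C / (1 - r) := mul_one_div C _
  linarith

section

variable {k : ℕ}

lemma pSeq'_succ (n : ℕ) : pSeq' k (n + 1) = pSeq' k n * qSeq' k n := rfl

lemma qSeq'_succ (n : ℕ) : qSeq' k (n + 1) = (qSeq' k n - 1)! := rfl

lemma lamSeq_zero : lamSeq k 0 = log k := by
  simp [lamSeq, pSeq', qSeq', grill]

lemma four_le_qSeq' (hk : 4 ≤ k) (n : ℕ) : 4 ≤ qSeq' k n := by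
  induction n with
  | zero => exact hk
  | succ n ih =>
    rw [qSeq'_succ]
    exact (by decide : 4 ≤ 3 !).trans (Nat.factorial_le (by omega))

lemma four_pow_le_pSeq' (hk : 4 ≤ k) (n : ℕ) : 4 ^ n ≤ pSeq' k n := by
  induction n with
  | zero => rfl
  | succ n ih =>
    rw [pow_succ, pSeq'_succ]
    exact Nat.mul_le_mul ih (four_le_qSeq' hk n)

lemma lamSeq_sub_lamSeq_succ_le (hk : 4 ≤ k) (n : ℕ) :
    lamSeq k n - lamSeq k (n + 1) ≤ 2 * (1 / 4) ^ n := by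
  have hp : (4 : ℝ) ^ n ≤ pSeq' k n := by exact_mod_cast four_pow_le_pSeq' hk n
  have hq : (4 : ℝ) ≤ qSeq' k n := by exact_mod_cast four_le_qSeq' hk n
  have hstep := self_mul_log_sub_log_factorial_pred_le (qSeq' k n)
  rw [lamSeq, lamSeq, pSeq'_succ, qSeq'_succ, Nat.cast_mul]
  generalize pSeq' k n = p at *
  generalize qSeq' k n = q at *
  have hp₀ : (0 : ℝ) < p := lt_of_lt_of_le (by positivity) hp
  have hq₀ : (0 : ℝ) < q := by linarith
  calc log q / p - log ((q - 1)! : ℝ) / (p * q)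
      = (q * log q - log ((q - 1)! : ℝ)) / (p * q) := by field_simp
    _ ≤ 2 * q / (p * q) := by gcongr
    _ = 2 / p := by field_simp
    _ ≤ 2 / 4 ^ n := by gcongr
    _ = 2 * (1 / 4) ^ n := by rw [one_div_pow, mul_one_div]

lemma log_sub_le_lamSeq (hk : 4 ≤ k) (n : ℕ) : log k - 8 / 3 ≤ lamSeq k n := by
  have := sub_le_of_sub_succ_le_geometric (by norm_num) (by norm_num) (by norm_num)
    (lamSeq_sub_lamSeq_succ_le hk) n
  rw [lamSeq_zero] at this
  linarith

end

/-- **Lemma (ii).** For `k ≥ 5` the limit `λ(k) = lim_n λ_n(k)` satisfies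
`λ(k) > log k − 5`. -/
theorem statement15 (k : ℕ) (hk : 5 ≤ k)
    (L : ℝ) (hL : Tendsto (lamSeq k) atTop (𝓝 L)) :
    Real.log k - 5 < L := by
  have hbound : log k - 8 / 3 ≤ L :=
    ge_of_tendsto' hL (log_sub_le_lamSeq (by omega))
  linarith

end ToeplitzPaper
end

section
/- Let d ≥ 1, k ≥ 5, and 0 < h < λ(k). Let M ≥ 4 be an integer such that ξ − (d+1) log ξ − 1 ≥ 0 for all real ξ ≥ M, and let N ∈ ℕ satisfy p′_{N−1} h ≥ 1, q′_{N−1} ≥ M, and (d log M + 3)/p′_N < λ(k) − h. Set p_0 = p′_0 = 1, q_n = q′_n for 0 ≤ n < N, and p_{n+1} = p_n q_n throughout. Then there exists a sequence of integers (q_{N+l})_{l≥0} such that for every l ≥ 0 (with p_{N+l+1} = p_{N+l} q_{N+l}): (i) q_{N+l−1} < q_{N+l} ≤ (q_{N+l−1} − 1)!; (ii) p_{N+l}·h + 3 ≤ log q_{N+l} ≤ p_{N+l}·h + d·log(M+l) + 3; (iii) (M+l)^d divides q_{N+l}; (iv) M + l + 1 ≤ q_{N+l}. -/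
/-!
The new terms are chosen greedily: `q_{N+l}` is the least multiple of `(M+l)^d` that is at least
`exp (p_{N+l} h + 3)`, which pins `log q_{N+l}` between `p_{N+l} h + 3` and that plus
`d log (M+l)`. Since `p_{N+l} h = p_{N+l-1} h · q_{N+l-1} ≥ q_{N+l-1}`, the sequence increases,
and `M + l ≤ p_{N+l} h` propagates by induction. The factorial bound at `l = 0` comes from
`λ(k) ≤ λ_N(k)` (the `λ_n` decrease) and the choice of `N`; for `l > 0` it comes from
`log n! ≥ n log n - n`, because `log q_{N+l+1} ≈ q_{N+l} p_{N+l} h ≤ q_{N+l} (log q_{N+l} - 3)`.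
-/

namespace ToeplitzPaper

open Filter Topology


/-- Given `q_0, q_1, q_2, …`, the sequence `p` with `p_0 = 1` and
`p_{n+1} = p_n · q_n`. -/
def pFrom (q : ℕ → ℕ) : ℕ → ℕ
  | 0 => 1
  | n + 1 => pFrom q n * q n

open Real
open scoped Nat

lemma log_factorial_pred_le (n : ℕ) : log ((n - 1)! : ℝ) ≤ n * log n := by
  have hle : ((n - 1)! : ℝ) ≤ (n : ℝ) ^ n := by
    exact_mod_cast (Nat.factorial_le (Nat.sub_le n 1)).trans (Nat.factorial_le_pow n)
  calc log ((n - 1)! : ℝ) ≤ log ((n : ℝ) ^ n) := log_le_log (by positivity) hle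
    _ = n * log n := log_pow n _

lemma lamSeq_succ_le (k n : ℕ) : lamSeq k (n + 1) ≤ lamSeq k n := by
  set p := pSeq' k n
  set q := qSeq' k n
  have hsucc : lamSeq k (n + 1) = log ((q - 1)! : ℝ) / (p * q : ℕ) := rfl
  rcases Nat.eq_zero_or_pos q with hq | hq
  · have hn : lamSeq k n = log q / p := rfl
    rw [hsucc, hn, hq]
    simp
  · calc lamSeq k (n + 1) ≤ (q * log q) / (p * q : ℕ) := by
          rw [hsucc]; exact div_le_div_of_nonneg_right (log_factorial_pred_le q) (by positivity)
      _ = lamSeq k n := by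
          rw [lamSeq, Nat.cast_mul, mul_comm (q : ℝ), mul_div_mul_right _ _ (by positivity)]

lemma lamSeq_antitone (k : ℕ) : Antitone (lamSeq k) :=
  antitone_nat_of_succ_le (lamSeq_succ_le k)

lemma add_lt_log_qSeq' {k n : ℕ} {h L c : ℝ} (hL : Tendsto (lamSeq k) atTop (𝓝 L))
    (hp : (0 : ℝ) < pSeq' k n) (hc : c / pSeq' k n < L - h) :
    pSeq' k n * h + c < log (qSeq' k n) := by
  have hlam : L ≤ log (qSeq' k n) / pSeq' k n := (lamSeq_antitone k).le_of_tendsto hL n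
  rw [div_lt_iff₀ hp] at hc
  rw [le_div_iff₀ hp] at hlam
  linarith

lemma log_factorial_ge (n : ℕ) : n * log n - n ≤ log (n ! : ℝ) := by
  rcases Nat.eq_zero_or_pos n with rfl | hn
  · simp
  have hn' : (0 : ℝ) < n := by exact_mod_cast hn
  have hbound := pow_div_factorial_le_exp _ hn'.le n
  rw [← log_le_iff_le_exp (by positivity), log_div (by positivity) (by positivity), log_pow]
    at hbound
  linarith

lemma log_le_sub_two {x : ℝ} (hx : 4 ≤ x) : log x ≤ x - 2 := by
  have hhalf := log_le_sub_one_of_pos (show 0 < x / 2 by linarith)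
  rw [log_div (by linarith) two_ne_zero] at hhalf
  have := log_two_lt_d9
  norm_num at this
  linarith

lemma natCast_le_of_log_le_log {a b : ℕ} (hb : 0 < b) (h : log a ≤ log b) : a ≤ b := by
  rcases Nat.eq_zero_or_pos a with rfl | ha
  · exact Nat.zero_le b
  exact_mod_cast (log_le_log_iff (by positivity) (by positivity)).1 h

lemma le_factorial_pred_of_log_le {Q Q' : ℕ} {y c : ℝ} (hQ : 4 ≤ Q) (hc : c + 1 ≤ Q)
    (hy : y + 3 ≤ log Q) (hQ' : log Q' ≤ y * Q + c + 3) : Q' ≤ (Q - 1)! := by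
  have hQR : (4 : ℝ) ≤ Q := by exact_mod_cast hQ
  have hfac : log ((Q - 1)! : ℝ) = log (Q ! : ℝ) - log Q := by
    rw [← Nat.mul_factorial_pred (by omega : Q ≠ 0), Nat.cast_mul,
      log_mul (by positivity) (by positivity)]
    ring
  have hyQ : y * Q ≤ (log Q - 3) * Q := mul_le_mul_of_nonneg_right (by linarith) (by positivity)
  refine natCast_le_of_log_le_log (Nat.factorial_pos _) ?_
  linarith [log_factorial_ge Q, log_le_sub_two hQR]

noncomputable def ceilMul (b : ℕ) (x : ℝ) : ℕ := b * ⌈x / b⌉₊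

section ceilMul

variable {b : ℕ}

lemma dvd_ceilMul (b : ℕ) (x : ℝ) : b ∣ ceilMul b x := dvd_mul_right _ _

lemma le_ceilMul (hb : 0 < b) (x : ℝ) : x ≤ ceilMul b x := by
  have hb' : (0 : ℝ) < b := by exact_mod_cast hb
  calc x = b * (x / b) := by field_simp
    _ ≤ b * ⌈x / b⌉₊ := by gcongr; exact Nat.le_ceil _
    _ = ceilMul b x := by rw [ceilMul, Nat.cast_mul]

lemma ceilMul_lt (hb : 0 < b) {x : ℝ} (hx : 0 ≤ x) : (ceilMul b x : ℝ) < x + b := by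
  have hb' : (0 : ℝ) < b := by exact_mod_cast hb
  calc (ceilMul b x : ℝ) = b * ⌈x / b⌉₊ := by rw [ceilMul, Nat.cast_mul]
    _ < b * (x / b + 1) := by gcongr; exact Nat.ceil_lt_add_one (by positivity)
    _ = x + b := by field_simp

lemma le_log_ceilMul_exp (hb : 0 < b) (a : ℝ) : a ≤ log (ceilMul b (exp a)) :=
  (le_log_iff_exp_le ((exp_pos a).trans_le (le_ceilMul hb _))).2 (le_ceilMul hb _)

lemma log_ceilMul_exp_le (hb : 2 ≤ b) {a : ℝ} (ha : 1 ≤ a) :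
    log (ceilMul b (exp a)) ≤ a + log b := by
  have hb' : (2 : ℝ) ≤ b := by exact_mod_cast hb
  have hexp : 2 ≤ exp a := by linarith [add_one_le_exp a]
  rw [log_le_iff_le_exp ((exp_pos a).trans_le (le_ceilMul (by omega) _)), exp_add,
    exp_log (by positivity)]
  calc (ceilMul b (exp a) : ℝ) ≤ exp a + b := (ceilMul_lt (by omega) (exp_pos a).le).le
    _ ≤ exp a * b := by nlinarith

end ceilMul

/-- The rule producing `q_{N+l}` from `l` and `p = p_{N+l}`. -/
noncomputable def nextQ (h : ℝ) (M d l p : ℕ) : ℕ := ceilMul ((M + l) ^ d) (exp (p * h + 3))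

section nextQ

variable {h : ℝ} {M d l p : ℕ}

lemma add_three_le_log_nextQ (hMl : 0 < M + l) : p * h + 3 ≤ log (nextQ h M d l p) :=
  le_log_ceilMul_exp (pow_pos hMl d) _

lemma log_nextQ_le (hd : 1 ≤ d) (hMl : 2 ≤ M + l) (hp : 0 ≤ p * h) :
    log (nextQ h M d l p) ≤ p * h + d * log ((M : ℝ) + l) + 3 := by
  have hbound := log_ceilMul_exp_le (a := p * h + 3)
    ((hMl.trans (le_self_pow₀ (by omega) (by omega))) : 2 ≤ (M + l) ^ d) (by linarith)
  push_cast [log_pow] at hbound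
  rw [nextQ]
  linarith

lemma pow_dvd_nextQ : (M + l) ^ d ∣ nextQ h M d l p := dvd_ceilMul _ _

end nextQ

section extendFrom

variable (f : ℕ → ℕ → ℕ) (q₀ : ℕ → ℕ) (N : ℕ)

/-- The products `p_{N+l}` when `q_{N+l} = f l p_{N+l}` and `p_N = p₀`. -/
def tailProd (p₀ : ℕ) : ℕ → ℕ
  | 0 => p₀
  | l + 1 => tailProd p₀ l * f l (tailProd p₀ l)

/-- The sequence agreeing with `q₀` below `N` and continued by `q_{N+l} = f l p_{N+l}`. -/
def extendFrom (n : ℕ) : ℕ :=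
  if n < N then q₀ n else f (n - N) (tailProd f (pFrom q₀ N) (n - N))

lemma extendFrom_of_lt {n : ℕ} (hn : n < N) : extendFrom f q₀ N n = q₀ n := if_pos hn

lemma pFrom_congr {q q' : ℕ → ℕ} {n : ℕ} (h : ∀ m < n, q m = q' m) :
    pFrom q n = pFrom q' n := by
  induction n with
  | zero => rfl
  | succ n ih =>
    simp only [pFrom, ih fun m hm => h m (by omega), h n (by omega)]

lemma pFrom_extendFrom_add (l : ℕ) :
    pFrom (extendFrom f q₀ N) (N + l) = tailProd f (pFrom q₀ N) l := by
  induction l with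
  | zero => exact pFrom_congr fun m hm => extendFrom_of_lt f q₀ N hm
  | succ l ih =>
    rw [← add_assoc, pFrom, ih, extendFrom, if_neg (by omega), Nat.add_sub_cancel_left]
    rfl

lemma extendFrom_add (l : ℕ) :
    extendFrom f q₀ N (N + l) = f l (pFrom (extendFrom f q₀ N) (N + l)) := by
  rw [pFrom_extendFrom_add, extendFrom, if_neg (by omega), Nat.add_sub_cancel_left]

end extendFrom

lemma pFrom_qSeq' (k n : ℕ) : pFrom (qSeq' k) n = pSeq' k n := by
  induction n with
  | zero => rfl
  | succ n ih => rw [pFrom, ih]; rfl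

lemma le_pFrom_succ_mul {q : ℕ → ℕ} {n : ℕ} {h : ℝ} (hn : 1 ≤ pFrom q n * h) :
    (q n : ℝ) ≤ pFrom q (n + 1) * h :=
  calc (q n : ℝ) ≤ (pFrom q n * h) * q n := le_mul_of_one_le_left (by positivity) hn
    _ = pFrom q (n + 1) * h := by push_cast [pFrom]; ring

lemma lt_of_one_le_pFrom_mul {q : ℕ → ℕ} {n : ℕ} {h : ℝ} (hn : 1 ≤ pFrom q n * h)
    (hlog : pFrom q (n + 1) * h + 3 ≤ log (q (n + 1))) : q n < q (n + 1) := by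
  have := log_le_self (Nat.cast_nonneg (α := ℝ) (q (n + 1)))
  have hlt : (q n : ℝ) < q (n + 1) := (le_pFrom_succ_mul hn).trans_lt (by linarith)
  exact_mod_cast hlt

section nextQ_sequence

variable {h : ℝ} {M d n : ℕ} {q : ℕ → ℕ}

lemma add_le_pFrom_mul (hq : ∀ l, q (n + l) = nextQ h M d l (pFrom q (n + l))) (hM : 1 ≤ M)
    (hn : M ≤ pFrom q n * h) (l : ℕ) : (M : ℝ) + l ≤ pFrom q (n + l) * h := by
  induction l with
  | zero => simpa using hn
  | succ l ih =>
    have hP : 1 ≤ pFrom q (n + l) * h := le_trans (by norm_cast; omega) ih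
    have hQ := hq l ▸ add_three_le_log_nextQ (h := h) (d := d) (p := pFrom q (n + l)) (by omega)
    have := log_le_self (Nat.cast_nonneg (α := ℝ) (q (n + l)))
    calc (M : ℝ) + (l + 1 : ℕ) ≤ q (n + l) := by push_cast; linarith
      _ ≤ pFrom q (n + l + 1) * h := le_pFrom_succ_mul hP

lemma add_lt_of_add_le_pFrom_mul (hq : ∀ l, q (n + l) = nextQ h M d l (pFrom q (n + l)))
    (hM : 1 ≤ M) {l : ℕ} (hl : (M : ℝ) + l ≤ pFrom q (n + l) * h) : M + l < q (n + l) := by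
  have hlog := hq l ▸ add_three_le_log_nextQ (h := h) (d := d) (p := pFrom q (n + l))
    (by omega)
  have := log_le_self (Nat.cast_nonneg (α := ℝ) (q (n + l)))
  have : ((M + l : ℕ) : ℝ) < q (n + l) := by push_cast; linarith
  exact_mod_cast this

lemma succ_le_factorial_of_add_le_pFrom_mul
    (hq : ∀ l, q (n + l) = nextQ h M d l (pFrom q (n + l))) (hd : 1 ≤ d) (hM4 : 4 ≤ M)
    (hM : ∀ ξ : ℝ, M ≤ ξ → d * log ξ ≤ ξ - 1) {l : ℕ}
    (hl : (M : ℝ) + l ≤ pFrom q (n + l) * h)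
    (hl' : (M : ℝ) + (l + 1 : ℕ) ≤ pFrom q (n + l + 1) * h) :
    q (n + l + 1) ≤ (q (n + l) - 1)! := by
  have hQ := add_lt_of_add_le_pFrom_mul hq (by omega) hl
  have hQR : ((M + l + 1 : ℕ) : ℝ) ≤ q (n + l) := by exact_mod_cast hQ
  have hlow := hq l ▸ add_three_le_log_nextQ (h := h) (d := d) (p := pFrom q (n + l)) (by omega)
  have hup := hq (l + 1) ▸ log_nextQ_le (h := h) (p := pFrom q (n + l + 1)) hd (by omega)
    (by linarith)
  have hc := hM (M + (l + 1 : ℕ)) (le_add_of_nonneg_right (Nat.cast_nonneg _))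
  refine le_factorial_pred_of_log_le (c := d * log ((M : ℝ) + (l + 1 : ℕ))) (by omega)
    (by push_cast at hc hQR ⊢; linarith) hlow ?_
  rw [← add_assoc, pFrom] at hup
  push_cast at hup ⊢
  linarith

lemma nextQ_sequence_spec (hq : ∀ l, q (n + 1 + l) = nextQ h M d l (pFrom q (n + 1 + l)))
    (hd : 1 ≤ d) (hM4 : 4 ≤ M) (hM : ∀ ξ : ℝ, M ≤ ξ → d * log ξ ≤ ξ - 1)
    (hprev : 1 ≤ pFrom q n * h) (hMq : M ≤ q n)
    (hfirst : pFrom q (n + 1) * h + d * log M + 3 ≤ log ((q n - 1)! : ℝ)) (l : ℕ) :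
    (q (n + 1 + l - 1) < q (n + 1 + l) ∧ q (n + 1 + l) ≤ (q (n + 1 + l - 1) - 1)!) ∧
      ((pFrom q (n + 1 + l) : ℝ) * h + 3 ≤ log (q (n + 1 + l)) ∧
        log (q (n + 1 + l)) ≤ (pFrom q (n + 1 + l) : ℝ) * h + d * log ((M : ℝ) + l) + 3) ∧
      (M + l) ^ d ∣ q (n + 1 + l) ∧ M + l + 1 ≤ q (n + 1 + l) := by
  have hinv := add_le_pFrom_mul hq (by omega)
    ((show (M : ℝ) ≤ q n by exact_mod_cast hMq).trans (le_pFrom_succ_mul hprev))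
  have hlow : ∀ l, pFrom q (n + 1 + l) * h + 3 ≤ log (q (n + 1 + l)) := fun l => by
    rw [hq l]; exact add_three_le_log_nextQ (by omega)
  have hup : ∀ l, log (q (n + 1 + l)) ≤ pFrom q (n + 1 + l) * h + d * log ((M : ℝ) + l) + 3 :=
    fun l => by rw [hq l]; exact log_nextQ_le hd (by omega) (by linarith [hinv l])
  refine ⟨?_, ⟨hlow l, hup l⟩, hq l ▸ pow_dvd_nextQ,
    add_lt_of_add_le_pFrom_mul hq (by omega) (hinv l)⟩
  cases l with
  | zero =>
    refine ⟨lt_of_one_le_pFrom_mul hprev (hlow 0),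
      natCast_le_of_log_le_log (Nat.factorial_pos _) ?_⟩
    have := hup 0
    push_cast at this
    simp only [add_zero, Nat.add_sub_cancel] at this ⊢
    linarith
  | succ l =>
    rw [show n + 1 + (l + 1) - 1 = n + 1 + l by omega]
    exact ⟨lt_of_one_le_pFrom_mul (le_trans (by norm_cast; omega) (hinv l)) (hlow (l + 1)),
      succ_le_factorial_of_add_le_pFrom_mul hq hd hM4 hM (hinv l) (hinv (l + 1))⟩

end nextQ_sequence

theorem statement17_general (d k : ℕ) (hd : 1 ≤ d)
    (h L : ℝ) (hL : Tendsto (lamSeq k) atTop (𝓝 L))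
    (M : ℕ) (hM4 : 4 ≤ M)
    (hM : ∀ ξ : ℝ, (M : ℝ) ≤ ξ → 0 ≤ ξ - ((d : ℝ) + 1) * Real.log ξ - 1)
    (N : ℕ) (hN1 : 1 ≤ N)
    (hNh : 1 ≤ (pSeq' k (N - 1) : ℝ) * h)
    (hNM : M ≤ qSeq' k (N - 1))
    (hNlam : ((d : ℝ) * Real.log M + 3) / (pSeq' k N : ℝ) < L - h) :
    ∃ q : ℕ → ℕ, (∀ n : ℕ, n < N → q n = qSeq' k n) ∧
      ∀ l : ℕ,
        (q (N + l - 1) < q (N + l) ∧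
          q (N + l) ≤ Nat.factorial (q (N + l - 1) - 1)) ∧
        ((pFrom q (N + l) : ℝ) * h + 3 ≤ Real.log (q (N + l)) ∧
          Real.log (q (N + l)) ≤
            (pFrom q (N + l) : ℝ) * h + (d : ℝ) * Real.log ((M : ℝ) + (l : ℝ)) + 3) ∧
        ((M + l) ^ d ∣ q (N + l)) ∧
        (M + l + 1 ≤ q (N + l)) := by
  obtain ⟨n, rfl⟩ : ∃ n, N = n + 1 := ⟨N - 1, by omega⟩
  rw [Nat.add_sub_cancel] at hNh hNM
  set q := extendFrom (nextQ h M d) (qSeq' k) (n + 1)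
  have hq_lt : ∀ m < n + 1, q m = qSeq' k m := fun m hm => extendFrom_of_lt _ _ _ hm
  have hp : ∀ m ≤ n + 1, pFrom q m = pSeq' k m := fun m hm =>
    (pFrom_congr fun i hi => hq_lt i (by omega)).trans (pFrom_qSeq' k m)
  have hh : 0 < h := pos_of_mul_pos_right (by linarith) (Nat.cast_nonneg _)
  have hpN : (0 : ℝ) < pSeq' k (n + 1) := by
    rw [show pSeq' k (n + 1) = pSeq' k n * qSeq' k n from rfl, Nat.cast_mul]
    exact mul_pos (pos_of_mul_pos_left (by linarith) hh.le) (by norm_cast; omega)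
  refine ⟨q, hq_lt, nextQ_sequence_spec (extendFrom_add _ _ _) hd hM4 ?_ ?_ ?_ ?_⟩
  · intro ξ hξ
    have := hM ξ hξ
    have : 0 ≤ log ξ := log_nonneg (le_trans (by norm_cast; omega) hξ)
    nlinarith
  · rwa [hp n (by omega)]
  · rwa [hq_lt n (by omega)]
  · rw [hq_lt n (by omega), hp (n + 1) le_rfl, show (qSeq' k n - 1)! = qSeq' k (n + 1) from rfl]
    linarith [add_lt_log_qSeq' hL hpN hNlam]

/-- **Lemma.** Let `d ≥ 1`, `k ≥ 5` and `0 < h < λ(k)`; let `M ≥ 4` with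
`ξ − (d+1)·log ξ − 1 ≥ 0` for all real `ξ ≥ M`, and let `N ≥ 1` satisfy
`p'_{N−1}·h ≥ 1`, `q'_{N−1} ≥ M` and `(d·log M + 3)/p'_N < λ(k) − h`.
Setting `q_n = q'_n` for `n < N`, there exist integers `q_N, q_{N+1}, …`
such that for every `l ≥ 0` (with `p_{n+1} = p_n q_n` throughout):
(i) `q_{N+l−1} < q_{N+l} ≤ (q_{N+l−1} − 1)!`;
(ii) `p_{N+l}·h + 3 ≤ log q_{N+l} ≤ p_{N+l}·h + d·log(M+l) + 3`;
(iii) `(M+l)^d ∣ q_{N+l}`;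
(iv) `M + l + 1 ≤ q_{N+l}`. -/
theorem statement17 (d k : ℕ) (hd : 1 ≤ d) (hk : 5 ≤ k)
    (h L : ℝ) (hL : Tendsto (lamSeq k) atTop (𝓝 L)) (h0 : 0 < h) (hhL : h < L)
    (M : ℕ) (hM4 : 4 ≤ M)
    (hM : ∀ ξ : ℝ, (M : ℝ) ≤ ξ → 0 ≤ ξ - ((d : ℝ) + 1) * Real.log ξ - 1)
    (N : ℕ) (hN1 : 1 ≤ N)
    (hNh : 1 ≤ (pSeq' k (N - 1) : ℝ) * h)
    (hNM : M ≤ qSeq' k (N - 1))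
    (hNlam : ((d : ℝ) * Real.log M + 3) / (pSeq' k N : ℝ) < L - h) :
    ∃ q : ℕ → ℕ, (∀ n : ℕ, n < N → q n = qSeq' k n) ∧
      ∀ l : ℕ,
        (q (N + l - 1) < q (N + l) ∧
          q (N + l) ≤ Nat.factorial (q (N + l - 1) - 1)) ∧
        ((pFrom q (N + l) : ℝ) * h + 3 ≤ Real.log (q (N + l)) ∧
          Real.log (q (N + l)) ≤
            (pFrom q (N + l) : ℝ) * h + (d : ℝ) * Real.log ((M : ℝ) + (l : ℝ)) + 3) ∧
        ((M + l) ^ d ∣ q (N + l)) ∧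
        (M + l + 1 ≤ q (N + l)) :=
  statement17_general d k hd h L hL M hM4 hM N hN1 hNh hNM hNlam

end ToeplitzPaper
end
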